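/- The word w = x₁ x₂ x₁⁻¹ x₂⁻¹ x₃ x₂ x₁ x₂⁻¹ x₁⁻¹ x₃⁻¹ (the commutator ⁅⁅x₁, x₂⁆, x₃⁆) in the free group on three generators is a solution to the 1-out-of-3 picture-hanging puzzle of length 10, and every solution w' to the 1-out-of-3 puzzle has |w'| ≥ 10; hence the minimum length of a 1-out-of-3 solution is exactly 10. -/

import Mathlib

/-- The removal homomorphism: kills the generators with index in `S`. -/
def kill {n : ℕ} (S : Finset (Fin n)) : FreeGroup (Fin n) →* FreeGroup (Fin n) :=
  FreeGroup.lift fun i => if i ∈ S then 1 else FreeGroup.of i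

/-- `w` is a solution to the `k`-out-of-`n` picture-hanging puzzle (Demaine convention). -/
def IsSolution {n : ℕ} (k : ℕ) (w : FreeGroup (Fin n)) : Prop :=
  ∀ S : Finset (Fin n),
    (k ≤ S.card → kill S w = 1) ∧ (S.card < k → kill S w ≠ 1)

/-- The three generators of the free group `F₃`. -/
def x₁ : FreeGroup (Fin 3) := FreeGroup.of 0
def x₂ : FreeGroup (Fin 3) := FreeGroup.of 1
def x₃ : FreeGroup (Fin 3) := FreeGroup.of 2

open scoped commutatorElement

/-!
A solution `w` is nontrivial but dies when any single generator is deleted. Deleting one generator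
preserves the exponent sums of the others, so all exponent sums of `w` vanish: every generator
occurs an even number of times, and at least twice, since otherwise deleting it would not change
`w`. If every generator occurs at least four times, `|w| ≥ 12`.

Otherwise some `xᵢ` occurs exactly twice, `w = a s b s⁻¹ c` with `s = xᵢ^±1` and `a, b, c` free
of `xᵢ`. Deleting `xᵢ` gives `a b c = 1`, hence `w = a ⁅s, b⁆ a⁻¹`. Sending `xᵢ` to a reflection,
another generator `xₖ` to a rotation of the infinite dihedral group and the remaining ones to `1`
kills `w`, and shows that `b` has exponent sum `0` in `xₖ`. So `b` is a nontrivial word whose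
exponent sums all vanish; it needs two distinct letters, each twice, so `|b| ≥ 4`. As `a b c = 1`,
`|a| + |c| ≥ |b|`, and `|w| = |a| + |b| + |c| + 2 ≥ 2 |b| + 2 ≥ 10`.
-/

open Multiplicative

theorem List.exists_eq_append_cons_of_countP_eq_one {β : Type*} {p : β → Bool} {L : List β}
    (h : L.countP p = 1) :
    ∃ A x B, L = A ++ x :: B ∧ p x ∧ A.countP p = 0 ∧ B.countP p = 0 := by
  obtain ⟨x, hx, hpx⟩ := List.countP_pos_iff.1 (h ▸ Nat.one_pos)
  obtain ⟨A, B, rfl⟩ := List.append_of_mem hx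
  simp only [List.countP_append, List.countP_cons, hpx, if_true] at h
  exact ⟨A, x, B, rfl, hpx, by omega, by omega⟩

theorem List.exists_eq_append_cons_append_cons_of_countP_eq_two {β : Type*} {p : β → Bool}
    {L : List β} (h : L.countP p = 2) :
    ∃ A x B y C, L = A ++ x :: (B ++ y :: C) ∧ p x ∧ p y ∧
      A.countP p = 0 ∧ B.countP p = 0 ∧ C.countP p = 0 := by
  obtain ⟨x, hx, hpx⟩ := List.countP_pos_iff.1 (h ▸ two_pos)
  obtain ⟨A, R, rfl⟩ := List.append_of_mem hx
  simp only [List.countP_append, List.countP_cons, hpx, if_true] at h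
  rcases Nat.add_eq_one_iff.1 (by omega : A.countP p + R.countP p = 1) with ⟨hA, hR⟩ | ⟨hA, hR⟩
  · obtain ⟨B, y, C, rfl, hpy, hB, hC⟩ := List.exists_eq_append_cons_of_countP_eq_one hR
    exact ⟨A, x, B, y, C, rfl, hpx, hpy, hA, hB, hC⟩
  · obtain ⟨A, y, B, rfl, hpy, hA, hB⟩ := List.exists_eq_append_cons_of_countP_eq_one hA
    exact ⟨A, y, B, x, R, by simp, hpy, hpx, hA, hB, hR⟩

theorem DihedralGroup.commutatorElement_sr_r {n : ℕ} (i j : ZMod n) :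
    ⁅sr i, r j⁆ = r (-2 * j) := by
  rw [commutatorElement_def, sr_mul_r, inv_sr, sr_mul_sr, inv_r, r_mul_r]
  ring_nf

namespace FreeGroup

variable {α : Type*} [DecidableEq α]

def expSum (i : α) : FreeGroup α →* Multiplicative ℤ :=
  lift fun j => if j = i then ofAdd 1 else 1

def letterCount (i : α) (w : FreeGroup α) : ℕ :=
  w.toWord.countP (·.1 = i)

theorem sum_countP_fst_eq [Fintype α] (L : List (α × Bool)) :
    ∑ i, L.countP (·.1 = i) = L.length := by
  induction L with
  | nil => simp
  | cons x L ih => simp [List.countP_cons, Finset.sum_add_distrib, ih]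

theorem sum_letterCount [Fintype α] (w : FreeGroup α) : ∑ i, w.letterCount i = w.norm :=
  sum_countP_fst_eq w.toWord

theorem letterCount_add_letterCount_le [Fintype α] {i j : α} (hij : i ≠ j) (w : FreeGroup α) :
    w.letterCount i + w.letterCount j ≤ w.norm := by
  rw [← sum_letterCount, ← Finset.sum_pair hij (f := (w.letterCount ·))]
  exact Finset.sum_le_sum_of_subset (Finset.subset_univ _)

theorem even_countP_fst_iff (i : α) (L : List (α × Bool)) :
    Even (L.countP (·.1 = i)) ↔ Even (toAdd (expSum i (mk L))) := by
  induction L with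
  | nil => simp [← one_eq_mk]
  | cons x L ih =>
    rw [← List.singleton_append, ← mul_mk, _root_.map_mul, toAdd_mul, List.countP_append]
    obtain ⟨j, b⟩ := x
    by_cases hj : j = i <;> cases b <;> simp [hj, expSum, lift_mk, ih, parity_simps]

theorem even_letterCount {i : α} {w : FreeGroup α} (h : expSum i w = 1) :
    Even (w.letterCount i) := by
  rw [letterCount, even_countP_fst_iff, mk_toWord, h]
  simp

theorem two_le_letterCount {i : α} {w : FreeGroup α} (h : expSum i w = 1)
    (hi : ∃ x ∈ w.toWord, x.1 = i) : 2 ≤ w.letterCount i := by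
  have hpos : 0 < w.letterCount i := List.countP_pos_iff.2 (by simpa using hi)
  obtain ⟨m, hm⟩ := even_letterCount h
  omega

end FreeGroup

section PictureHanging

variable {n : ℕ}

open FreeGroup DihedralGroup

@[simp]
theorem kill_of (S : Finset (Fin n)) (i : Fin n) :
    kill S (of i) = if i ∈ S then 1 else of i := by
  simp [kill]

theorem kill_mk (S : Finset (Fin n)) (L : List (Fin n × Bool)) :
    kill S (mk L) = mk (L.filter (·.1 ∉ S)) := by
  induction L with
  | nil => rfl
  | cons x L ih =>
    rw [← List.singleton_append, ← mul_mk, _root_.map_mul, ih, List.singleton_append,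
      List.filter_cons]
    obtain ⟨i, b⟩ := x
    by_cases hi : i ∈ S <;> cases b <;> simp [hi, kill, lift_mk, mul_mk, of, inv_mk, invRev]

theorem kill_mk_of_forall_notMem {S : Finset (Fin n)} {L : List (Fin n × Bool)}
    (h : ∀ x ∈ L, x.1 ∉ S) : kill S (mk L) = mk L := by
  rw [kill_mk, List.filter_eq_self.2 (by simpa using h)]

theorem kill_empty : kill (∅ : Finset (Fin n)) = MonoidHom.id _ :=
  ext_hom _ _ fun i => by simp

theorem kill_kill_of_subset {S T : Finset (Fin n)} (h : T ⊆ S) (w : FreeGroup (Fin n)) :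
    kill S (kill T w) = kill S w := by
  rw [← MonoidHom.comp_apply]
  congr 1
  refine ext_hom _ _ fun i => ?_
  by_cases hi : i ∈ T
  · simp [hi, h hi]
  · simp [hi]

theorem kill_compl_singleton (k : Fin n) (w : FreeGroup (Fin n)) :
    kill {k}ᶜ w = of k ^ toAdd (expSum k w) := by
  rw [← zpowersHom_apply, ← MonoidHom.comp_apply]
  congr 1
  refine ext_hom _ _ fun i => ?_
  by_cases hi : i = k <;> simp [hi, expSum]

theorem kill_singleton_eq_one {i : Fin n} {s : FreeGroup (Fin n)} (hs : kill {i}ᶜ s = s) :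
    kill {i} s = 1 := by
  rw [← hs, kill_compl_singleton, map_zpow, kill_of, if_pos (Finset.mem_singleton_self i), one_zpow]

theorem eq_one_of_kill_compl_singleton {k : Fin n} {w : FreeGroup (Fin n)}
    (hw : kill {k}ᶜ w = w) (h : expSum k w = 1) : w = 1 := by
  rw [← hw, kill_compl_singleton, h, toAdd_one, zpow_zero]

theorem expSum_kill_of_notMem {S : Finset (Fin n)} {k : Fin n} (hk : k ∉ S)
    (w : FreeGroup (Fin n)) : expSum k (kill S w) = expSum k w := by
  rw [← MonoidHom.comp_apply]
  congr 1
  refine ext_hom _ _ fun i => ?_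
  by_cases hi : i ∈ S
  · simp [hi, expSum, ne_of_mem_of_not_mem hi hk]
  · simp [hi]

theorem expSum_kill_of_mem {S : Finset (Fin n)} {k : Fin n} (hk : k ∈ S)
    (w : FreeGroup (Fin n)) : expSum k (kill S w) = 1 := by
  rw [← MonoidHom.comp_apply, ← MonoidHom.one_apply w]
  congr 1
  refine ext_hom _ _ fun i => ?_
  by_cases hi : i ∈ S
  · simp [hi]
  · simp [hi, expSum, (ne_of_mem_of_not_mem hk hi).symm]

theorem expSum_eq_one_of_forall_kill (hn : 2 ≤ n) {w : FreeGroup (Fin n)}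
    (h : ∀ j, kill {j} w = 1) (k : Fin n) : expSum k w = 1 := by
  have := Fin.nontrivial_iff_two_le.2 hn
  obtain ⟨j, hj⟩ := exists_ne k
  rw [← expSum_kill_of_notMem (S := {j}) (by simpa using hj.symm), h j, _root_.map_one]

theorem isSolution_one_iff {w : FreeGroup (Fin n)} :
    IsSolution 1 w ↔ w ≠ 1 ∧ ∀ i, kill {i} w = 1 := by
  constructor
  · intro h
    exact ⟨fun hw => (h ∅).2 (by simp) (by simp [kill_empty, hw]), fun i => (h {i}).1 (by simp)⟩
  · rintro ⟨hw, h⟩ S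
    refine ⟨fun hS => ?_, fun hS => ?_⟩
    · obtain ⟨i, hi⟩ := Finset.card_pos.1 hS
      rw [← kill_kill_of_subset (Finset.singleton_subset_iff.2 hi), h i, _root_.map_one]
    · rw [Nat.lt_one_iff, Finset.card_eq_zero] at hS
      simpa [hS, kill_empty] using hw

def reflectRotate (i k : Fin n) : FreeGroup (Fin n) →* DihedralGroup 0 :=
  lift fun m => if m = i then sr 0 else if m = k then r 1 else 1

theorem reflectRotate_kill {i j k : Fin n} (hji : j ≠ i) (hjk : j ≠ k) (w : FreeGroup (Fin n)) :
    reflectRotate i k (kill {j} w) = reflectRotate i k w := by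
  rw [← MonoidHom.comp_apply]
  congr 1
  refine ext_hom _ _ fun m => ?_
  by_cases hm : m = j
  · simp [hm, reflectRotate, hji, hjk]
  · simp [hm]

theorem reflectRotate_kill_self {i k : Fin n} (hik : i ≠ k) (w : FreeGroup (Fin n)) :
    reflectRotate i k (kill {i} w) = r 1 ^ toAdd (expSum k w) := by
  rw [← zpowersHom_apply, ← MonoidHom.comp_apply, ← MonoidHom.comp_apply]
  congr 1
  refine ext_hom _ _ fun m => ?_
  by_cases hm : m = i
  · simp [hm, expSum, hik]
  · by_cases hmk : m = k <;> simp [hm, hmk, reflectRotate, expSum, hik.symm]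

theorem reflectRotate_mk_singleton {i k : Fin n} {x : Fin n × Bool} (hx : x.1 = i) :
    reflectRotate i k (mk [x]) = sr 0 := by
  obtain ⟨_, _ | _⟩ := x <;> simp_all [reflectRotate, lift_mk]

theorem expSum_eq_one_of_kill_commutator (hn : 3 ≤ n) {i k : Fin n} (hik : i ≠ k)
    {x : Fin n × Bool} (hx : x.1 = i) {b : FreeGroup (Fin n)} (hb : kill {i} b = b)
    (h : ∀ j, kill {j} ⁅mk [x], b⁆ = 1) : expSum k b = 1 := by
  obtain ⟨j, -, hj⟩ := Finset.exists_mem_notMem_of_card_lt_card (s := {i, k}) (t := .univ)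
    (by rw [Finset.card_univ, Fintype.card_fin]; exact Finset.card_le_two.trans_lt (by omega))
  rw [Finset.mem_insert, Finset.mem_singleton, not_or] at hj
  have h1 : reflectRotate i k ⁅mk [x], b⁆ = 1 := by
    rw [← reflectRotate_kill hj.1 hj.2, h j, _root_.map_one]
  rw [map_commutatorElement, reflectRotate_mk_singleton hx, ← hb, reflectRotate_kill_self hik,
    r_one_zpow, commutatorElement_sr_r, one_def, r.injEq] at h1
  rw [← toAdd_eq_zero]
  simpa using h1

theorem four_le_norm_of_forall_expSum_eq_one {w : FreeGroup (Fin n)} (hw : w ≠ 1)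
    (h : ∀ k, expSum k w = 1) : 4 ≤ w.norm := by
  obtain ⟨x, hx⟩ := List.exists_mem_of_ne_nil _ (mt toWord_eq_nil_iff.1 hw)
  obtain ⟨y, hy, hyx⟩ : ∃ y ∈ w.toWord, y.1 ≠ x.1 := by
    by_contra! hall
    refine hw (eq_one_of_kill_compl_singleton ?_ (h x.1))
    rw [← mk_toWord (x := w), kill_mk_of_forall_notMem (by simpa using hall)]
  have := letterCount_add_letterCount_le hyx w
  have := two_le_letterCount (h x.1) ⟨x, hx, rfl⟩
  have := two_le_letterCount (h y.1) ⟨y, hy, rfl⟩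
  omega

theorem mul_mul_eq_one_and_eq_conj_commutator (hn : 2 ≤ n) {i : Fin n}
    {a b c s t : FreeGroup (Fin n)} (ha : kill {i} a = a) (hb : kill {i} b = b)
    (hc : kill {i} c = c) (hs : kill {i}ᶜ s = s) (ht : kill {i}ᶜ t = t)
    (hkill : ∀ j, kill {j} (a * s * b * t * c) = 1) :
    a * b * c = 1 ∧ a * s * b * t * c = a * ⁅s, b⁆ * a⁻¹ := by
  have habc : a * b * c = 1 := by
    have := hkill i
    rwa [_root_.map_mul, _root_.map_mul, _root_.map_mul, _root_.map_mul, ha, hb, hc,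
      kill_singleton_eq_one hs, kill_singleton_eq_one ht, mul_one, mul_one] at this
  have hts : t = s⁻¹ := by
    refine eq_inv_of_mul_eq_one_right (eq_one_of_kill_compl_singleton (k := i) ?_ ?_)
    · rw [_root_.map_mul, hs, ht]
    · have hsum := expSum_eq_one_of_forall_kill hn hkill i
      have hfree {u : FreeGroup (Fin n)} (hu : kill {i} u = u) : expSum i u = 1 :=
        hu ▸ expSum_kill_of_mem (Finset.mem_singleton_self i) u
      rwa [_root_.map_mul, _root_.map_mul, _root_.map_mul, _root_.map_mul, hfree ha, hfree hb,
        hfree hc, one_mul, mul_one, mul_one, ← _root_.map_mul] at hsum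
  refine ⟨habc, ?_⟩
  rw [hts, eq_inv_of_mul_eq_one_right habc, commutatorElement_def]
  group

theorem ten_le_norm_of_toWord_eq {w : FreeGroup (Fin n)} {A B C : List (Fin n × Bool)}
    {x y : Fin n × Bool} (hw : w.toWord = A ++ x :: (B ++ y :: C))
    (habc : mk A * mk B * mk C = 1) (hB : 4 ≤ (mk B).norm) : 10 ≤ w.norm := by
  have hBAC : (mk B).norm ≤ (mk A).norm + (mk C).norm :=
    calc (mk B).norm = ((mk A)⁻¹ * (mk A * mk B * mk C) * (mk C)⁻¹).norm := by group
      _ = ((mk A)⁻¹ * (mk C)⁻¹).norm := by rw [habc, mul_one]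
      _ ≤ (mk A).norm + (mk C).norm := by
          simpa only [norm_inv_eq] using norm_mul_le (mk A)⁻¹ (mk C)⁻¹
  have hnorm : w.norm = A.length + B.length + C.length + 2 := by
    rw [FreeGroup.norm, hw]
    simp only [List.length_append, List.length_cons]
    omega
  have : (mk A).norm ≤ A.length := norm_mk_le
  have : (mk B).norm ≤ B.length := norm_mk_le
  have : (mk C).norm ≤ C.length := norm_mk_le
  omega

theorem ten_le_norm_of_letterCount_eq_two (hn : 3 ≤ n) {w : FreeGroup (Fin n)}
    (hkill : ∀ j, kill {j} w = 1) {i : Fin n} (hi : w.letterCount i = 2) : 10 ≤ w.norm := by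
  obtain ⟨A, x, B, y, C, hL, hx, hy, hA, hB, hC⟩ :=
    List.exists_eq_append_cons_append_cons_of_countP_eq_two hi
  simp only [decide_eq_true_eq, List.countP_eq_zero] at hx hy hA hB hC
  have hB' : kill {i} (mk B) = mk B := kill_mk_of_forall_notMem (by simpa using hB)
  have hw : w = mk A * mk [x] * mk B * mk [y] * mk C := by
    rw [← mk_toWord (x := w), hL]
    simp only [mul_mk, List.append_assoc, List.cons_append, List.nil_append]
  obtain ⟨habc, hconj⟩ := mul_mul_eq_one_and_eq_conj_commutator (by omega)
    (kill_mk_of_forall_notMem (by simpa using hA)) hB'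
    (kill_mk_of_forall_notMem (by simpa using hC)) (kill_mk_of_forall_notMem (by simp [hx]))
    (kill_mk_of_forall_notMem (by simp [hy])) (hw ▸ hkill)
  rw [← hw] at hconj
  have hB1 : mk B ≠ 1 := by
    intro hB1
    rw [hB1, commutatorElement_one_right, mul_one, mul_inv_cancel, ← toWord_eq_nil_iff, hL] at hconj
    simp at hconj
  have hBsum (k : Fin n) : expSum k (mk B) = 1 := by
    rcases eq_or_ne i k with rfl | hik
    · rw [← hB', expSum_kill_of_mem (Finset.mem_singleton_self i)]
    · refine expSum_eq_one_of_kill_commutator hn hik hx hB' fun j => ?_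
      have := hkill j
      rwa [hconj, _root_.map_mul, _root_.map_mul, _root_.map_inv, conj_eq_one_iff] at this
  exact ten_le_norm_of_toWord_eq hL habc (four_le_norm_of_forall_expSum_eq_one hB1 hBsum)

theorem ten_le_norm_of_isSolution_one (hn : 3 ≤ n) {w : FreeGroup (Fin n)}
    (hw : IsSolution 1 w) : 10 ≤ w.norm := by
  obtain ⟨hw1, hkill⟩ := isSolution_one_iff.1 hw
  have hsum := expSum_eq_one_of_forall_kill (by omega) hkill
  have hcount (i : Fin n) : 2 ≤ w.letterCount i := by
    refine two_le_letterCount (hsum i) ?_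
    by_contra! h
    refine hw1 ?_
    rw [← hkill i, ← mk_toWord (x := w), kill_mk_of_forall_notMem (by simpa using h)]
  by_cases h2 : ∃ i, w.letterCount i = 2
  · obtain ⟨i, hi⟩ := h2
    exact ten_le_norm_of_letterCount_eq_two hn hkill hi
  push Not at h2
  have h4 (i : Fin n) : 4 ≤ w.letterCount i := by
    obtain ⟨m, hm⟩ := even_letterCount (hsum i)
    have := hcount i
    have := h2 i
    omega
  calc 10 ≤ ∑ _i : Fin n, 4 := by simp; omega
    _ ≤ ∑ i, w.letterCount i := Finset.sum_le_sum fun i _ => h4 i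
    _ = w.norm := sum_letterCount w

end PictureHanging

theorem one_out_of_three_min_length :
    IsSolution 1 ⁅⁅x₁, x₂⁆, x₃⁆ ∧ FreeGroup.norm ⁅⁅x₁, x₂⁆, x₃⁆ = 10 ∧
    ∀ w' : FreeGroup (Fin 3), IsSolution 1 w' → 10 ≤ FreeGroup.norm w' := by
  have hnorm : FreeGroup.norm ⁅⁅x₁, x₂⁆, x₃⁆ = 10 := by decide
  refine ⟨isSolution_one_iff.2 ⟨fun h => ?_, fun i => ?_⟩, hnorm,
    fun w hw => ten_le_norm_of_isSolution_one le_rfl hw⟩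
  · simp [h] at hnorm
  · fin_cases i <;> simp [x₁, x₂, x₃]
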